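/- Let A ∈ {0,1}^{m×n} be the adjacency matrix of a (k,ε,d)-expander graph with k ≥ 2, and let w ∈ {0,1}^m be a partial support of column a_l (supp(w) ⊆ supp(a_l)). If |supp(w)| ≥ 2εd, then for every h ≠ l, supp(w) ⊄ supp(a_h); that is, w originates uniquely from a_l. -/

import Mathlib

/-!
Two distinct columns form a set of size `2 ≤ k`, so the expansion property makes their
supports cover more than `2 (1 - ε) d` rows. By inclusion–exclusion their overlap then has
fewer than `2 ε d` rows, which leaves no room for `W` in both supports.
-/

open Finset

theorem card_inter_lt_of_card_union_gt {α : Type*} [DecidableEq α] {s t : Finset α} {d : ℕ}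
    {ε : ℝ} (hs : #s = d) (ht : #t = d) (hunion : (#(s ∪ t) : ℝ) > (1 - ε) * d * 2) :
    (#(s ∩ t) : ℝ) < 2 * ε * d := by
  have hincl : (#(s ∪ t) : ℝ) + #(s ∩ t) = d + d := by
    exact_mod_cast (card_union_add_card_inter s t).trans (by rw [hs, ht])
  linarith

theorem card_inter_lt_of_expander {ι α : Type*} [DecidableEq ι] [DecidableEq α]
    {k d : ℕ} {ε : ℝ} (hk : 2 ≤ k) {supp : ι → Finset α} (hcard : ∀ i, #(supp i) = d)
    (hexp : ∀ S : Finset ι, #S ≤ k → (#(S.biUnion supp) : ℝ) > (1 - ε) * d * #S)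
    {i j : ι} (hij : i ≠ j) :
    (#(supp i ∩ supp j) : ℝ) < 2 * ε * d := by
  have hpair : #({i, j} : Finset ι) = 2 := card_pair hij
  have hcover := hexp {i, j} (hpair ▸ hk)
  rw [hpair, biUnion_insert, singleton_biUnion] at hcover
  exact card_inter_lt_of_card_union_gt (hcard i) (hcard j) (by exact_mod_cast hcover)

/-- A partial support `W` of a column `l` of the adjacency matrix of a
`(k, ε, d)`-expander (`k ≥ 2`) with `|W| ≥ 2 ε d` originates uniquely from that
column: `W` is not contained in the support of any other column. -/
theorem partial_support_unique_origin
    (n m k d : ℕ) (ε : ℝ) (hk : 2 ≤ k)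
    (colSupp : Fin n → Finset (Fin m))
    (hcol : ∀ l : Fin n, (colSupp l).card = d)
    (hexp : ∀ S : Finset (Fin n), S.card ≤ k →
      ((S.biUnion colSupp).card : ℝ) > (1 - ε) * d * S.card)
    (l : Fin n) (W : Finset (Fin m))
    (hW : W ⊆ colSupp l)
    (hWcard : ((W.card : ℝ) ≥ 2 * ε * d)) :
    ∀ h : Fin n, h ≠ l → ¬ (W ⊆ colSupp h) := by
  intro h hne hWh
  have hoverlap := card_inter_lt_of_expander hk hcol hexp hne
  have hWle : (#W : ℝ) ≤ #(colSupp h ∩ colSupp l) := by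
    exact_mod_cast card_le_card (subset_inter hWh hW)
  linarith
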